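/- Hardy-type inequality on (0,ω] (Lemma 4.2): Let ω ∈ (0, π/2]. Then for every f ∈ C_0^∞((0,ω]) one has ∫₀^ω |f'(θ)|² dθ ≥ (1/4) ∫₀^ω |f(θ)|² / sin²θ dθ + (π²/(16ω²)) ∫₀^ω |f(θ)|² dθ. -/

import Mathlib

open MeasureTheory Real Set

set_option maxHeartbeats 1000000

noncomputable section

/-- The auxiliary weight function used in the proof of the Hardy inequality. -/
def hardyW (K t : ℝ) : ℝ := 1 + K * Real.log ((1 + Real.cos t) / 2)

/-- The logarithmic-derivative function used in the quadratic-form argument. -/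
def hardyPhi (K t : ℝ) : ℝ :=
  Real.cos t / (2 * Real.sin t) - K * Real.sin t / ((1 + Real.cos t) * hardyW K t)

/-- The (raw) derivative of `hardyPhi`. -/
def hardyPhid (K t : ℝ) : ℝ :=
  ((-Real.sin t) * (2 * Real.sin t) - Real.cos t * (2 * Real.cos t)) / (2 * Real.sin t) ^ 2 -
    (K * Real.cos t * ((1 + Real.cos t) * hardyW K t) -
        K * Real.sin t * ((-Real.sin t) * hardyW K t +
          (1 + Real.cos t) * (-(K * Real.sin t) / (1 + Real.cos t)))) /
      ((1 + Real.cos t) * hardyW K t) ^ 2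

lemma hardy_one_sub_cos {x : ℝ} (hx : 0 ≤ x) (hxπ : x ≤ π) : 1 - Real.cos x ≤ x ^ 2 / 2 := by
  have h1 : Real.cos x = 1 - 2 * Real.sin (x / 2) ^ 2 := by
    have h2 := Real.cos_sq (x / 2)
    have h3 := Real.sin_sq_add_cos_sq (x / 2)
    rw [show 2 * (x / 2) = x by ring] at h2
    nlinarith
  have hs0 : 0 ≤ Real.sin (x / 2) :=
    Real.sin_nonneg_of_nonneg_of_le_pi (by linarith) (by linarith [Real.pi_pos])
  have hs : Real.sin (x / 2) ≤ x / 2 := by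
    rcases eq_or_lt_of_le hx with h | h
    · simp [← h]
    · exact (Real.sin_lt (by linarith)).le
  nlinarith

/-- Key numerical inequality: `5(π² - 4ω²) ≤ 64 cos ω` on `(0, π/2]`. -/
lemma hardy_key_num {ω : ℝ} (h0 : 0 < ω) (h2 : ω ≤ π / 2) :
    5 * (π ^ 2 - 4 * ω ^ 2) ≤ 64 * Real.cos ω := by
  have hπ1 : π < 3.141593 := Real.pi_lt_d6
  have hπ2 : 3.141592 < π := Real.pi_gt_d6
  rcases le_or_gt ω 1.1 with hc | hc
  · have h1 : 1 - ω ^ 2 / 2 ≤ Real.cos ω := by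
      have := hardy_one_sub_cos h0.le (by linarith)
      linarith
    nlinarith
  · obtain ⟨δ, hδdef⟩ : ∃ δ : ℝ, δ = π / 2 - ω := ⟨_, rfl⟩
    have hδ0 : 0 ≤ δ := by rw [hδdef]; linarith
    have hδ1 : δ ≤ 0.48 := by rw [hδdef]; linarith
    have hcos : Real.cos ω = Real.sin δ := by
      rw [hδdef, Real.sin_pi_div_two_sub]
    rcases eq_or_lt_of_le hδ0 with he | hδpos
    · have hωeq : ω = π / 2 := by rw [hδdef] at he; linarith
      rw [hcos, ← he, Real.sin_zero, hωeq]
      nlinarith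
    · have hsin : δ - δ ^ 3 / 4 < Real.sin δ := by
        linarith [Real.sin_gt_sub_cube hδpos, pow_pos hδpos 3]
      have hA : π ^ 2 - 4 * ω ^ 2 = 4 * δ * (π - δ) := by
        rw [hδdef]; ring
      rw [hcos, hA]
      have t1 : 0 ≤ δ * (64 - 20 * π) := mul_nonneg hδpos.le (by linarith)
      have t2 : 0 ≤ 4 * δ ^ 2 * (5 - 4 * δ) :=
        mul_nonneg (by positivity) (by linarith)
      nlinarith [hsin, t1, t2]

/-- Boundary estimates: positivity of the weight `W` at `ω`, and the boundary inequality. -/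
lemma hardy_boundary {ω K : ℝ} (h0 : 0 < ω) (h2 : ω ≤ π / 2)
    (hKA : K * (16 * ω ^ 2) = π ^ 2 - 4 * ω ^ 2) (hK0 : 0 ≤ K) :
    0 < hardyW K ω ∧
      2 * K * (1 - Real.cos ω) ≤ Real.cos ω * hardyW K ω := by
  have hπpos := Real.pi_pos
  obtain ⟨y, hydef⟩ : ∃ y : ℝ, y = Real.cos (ω / 2) := ⟨_, rfl⟩
  obtain ⟨c, hcdef⟩ : ∃ c : ℝ, c = Real.cos ω := ⟨_, rfl⟩
  obtain ⟨m, hmdef⟩ : ∃ m : ℝ, m = -Real.log y := ⟨_, rfl⟩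
  have hω2 : (0:ℝ) < ω ^ 2 := by positivity
  have hy0 : 0 < y := by
    rw [hydef]
    apply Real.cos_pos_of_mem_Ioo
    constructor <;> [linarith; linarith]
  have hy1 : y ≤ 1 := by rw [hydef]; exact Real.cos_le_one _
  have hy2 : y ^ 2 = (1 + c) / 2 := by
    rw [hydef, hcdef]
    have := Real.cos_sq (ω / 2)
    rw [show 2 * (ω / 2) = ω by ring] at this
    linarith
  have hc0 : 0 ≤ c := by rw [hcdef]; exact Real.cos_nonneg_of_mem_Icc ⟨by linarith, h2⟩
  have hcy : c ≤ y := by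
    rw [hcdef, hydef]
    exact Real.cos_le_cos_of_nonneg_of_le_pi (by linarith) (by linarith) (by linarith)
  have hm0 : 0 ≤ m := by
    rw [hmdef, neg_nonneg]
    exact Real.log_nonpos hy0.le hy1
  have hym : y * m ≤ 1 - y := by
    have hl := Real.log_le_sub_one_of_pos (inv_pos.mpr hy0)
    rw [Real.log_inv] at hl
    have h4 : m ≤ y⁻¹ - 1 := by rw [hmdef]; linarith
    have h3 : y * m ≤ y * (y⁻¹ - 1) := by nlinarith
    rw [mul_sub, mul_inv_cancel₀ hy0.ne'] at h3
    linarith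
  have h1y : 1 - y ≤ ω ^ 2 / 8 := by
    have := hardy_one_sub_cos (by linarith : (0:ℝ) ≤ ω / 2) (by linarith)
    rw [← hydef] at this
    nlinarith
  have h1c : 1 - c ≤ ω ^ 2 / 2 := by
    have := hardy_one_sub_cos h0.le (by linarith)
    rw [← hcdef] at this
    linarith
  have hy7 : (0.7:ℝ) ≤ y := by
    have hh : Real.cos (π / 4) ≤ Real.cos (ω / 2) :=
      Real.cos_le_cos_of_nonneg_of_le_pi (by linarith) (by linarith) (by linarith)
    rw [Real.cos_pi_div_four] at hh
    have hs2 : Real.sqrt 2 ≥ 1.4 := by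
      nlinarith [Real.sq_sqrt (by norm_num : (0:ℝ) ≤ 2), Real.sqrt_nonneg 2]
    rw [hydef]
    nlinarith
  have hπ1 : π < 3.141593 := Real.pi_lt_d6
  have hA0 : 0 ≤ π ^ 2 - 4 * ω ^ 2 := by nlinarith
  have hπsq : π ^ 2 ≤ 9.86961 := by
    nlinarith [mul_lt_mul_of_pos_left hπ1 hπpos]
  have hA9 : π ^ 2 - 4 * ω ^ 2 ≤ 9.86961 := by nlinarith [hπsq, sq_nonneg ω]
  have hm28 : m ≤ ω ^ 2 * (5 / 28) := by
    have t3 : 0 ≤ (y - 0.7) * m := mul_nonneg (by linarith) hm0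
    nlinarith [hym, h1y, t3]
  have hlog : Real.log ((1 + c) / 2) = -(2 * m) := by
    rw [← hy2, Real.log_pow, hmdef]
    push_cast
    ring
  have hW : hardyW K ω = 1 - 2 * K * m := by
    rw [hardyW, ← hcdef, hlog]; ring
  have hKm : 2 * K * m * (16 * ω ^ 2) = 2 * ((π ^ 2 - 4 * ω ^ 2) * m) := by
    linear_combination 2 * m * hKA
  have hAm : (π ^ 2 - 4 * ω ^ 2) * m ≤ 9.86961 * (ω ^ 2 * (5 / 28)) := by
    apply mul_le_mul hA9 hm28 hm0 (by norm_num)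
  have hWpos : 0 < hardyW K ω := by
    rw [hW]
    have hmm : 0 < (1 - 2 * K * m) * (16 * ω ^ 2) := by nlinarith [hAm, hKm]
    nlinarith [hmm, hω2]
  refine ⟨hWpos, ?_⟩
  have hkey : 5 * (π ^ 2 - 4 * ω ^ 2) ≤ 64 * c := by
    rw [hcdef]; exact hardy_key_num h0 h2
  have hmc : m * c ≤ ω ^ 2 / 8 := by
    have h1 : m * c ≤ m * y := by nlinarith
    nlinarith
  have hmul : 2 * ((π ^ 2 - 4 * ω ^ 2) * (1 - c)) + 2 * ((π ^ 2 - 4 * ω ^ 2) * (m * c)) ≤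
      16 * ω ^ 2 * c := by
    have e1 : (π ^ 2 - 4 * ω ^ 2) * (1 - c) ≤ (π ^ 2 - 4 * ω ^ 2) * (ω ^ 2 / 2) :=
      mul_le_mul_of_nonneg_left h1c hA0
    have e2 : (π ^ 2 - 4 * ω ^ 2) * (m * c) ≤ (π ^ 2 - 4 * ω ^ 2) * (ω ^ 2 / 8) :=
      mul_le_mul_of_nonneg_left hmc hA0
    have e3 : 5 * (π ^ 2 - 4 * ω ^ 2) * ω ^ 2 ≤ 64 * c * ω ^ 2 :=
      mul_le_mul_of_nonneg_right hkey (by positivity)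
    nlinarith
  rw [← hcdef, hW]
  have e1 : 2 * K * (1 - c) * (16 * ω ^ 2) = 2 * ((π ^ 2 - 4 * ω ^ 2) * (1 - c)) := by
    linear_combination 2 * (1 - c) * hKA
  have e2 : c * (1 - 2 * K * m) * (16 * ω ^ 2) =
      16 * ω ^ 2 * c - 2 * ((π ^ 2 - 4 * ω ^ 2) * (m * c)) := by
    linear_combination (-2 * m * c) * hKA
  rw [← mul_le_mul_iff_left₀ (show (0:ℝ) < 16 * ω ^ 2 by positivity), e1, e2]
  linarith

/-- The Riccati-type inequality for the raw derivative of `hardyPhi`. -/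
lemma hardy_riccati (s c Wt K : ℝ) (hs : 0 < s) (hc : 0 < 1 + c) (hW : 0 < Wt)
    (hW1 : Wt ≤ 1) (hK : 0 ≤ K) (hpy : s ^ 2 + c ^ 2 = 1) :
    1 / (4 * s ^ 2) + 1 / 4 + K ≤
      -(((-s) * (2 * s) - c * (2 * c)) / (2 * s) ^ 2 -
          (K * c * ((1 + c) * Wt) - K * s * ((-s) * Wt + (1 + c) * (-(K * s) / (1 + c)))) /
            ((1 + c) * Wt) ^ 2) -
        (c / (2 * s) - K * s / ((1 + c) * Wt)) ^ 2 := by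
  have hs' : s ≠ 0 := hs.ne'
  have hc' : (1 + c) ≠ 0 := hc.ne'
  have hW' : Wt ≠ 0 := hW.ne'
  have key : -(((-s) * (2 * s) - c * (2 * c)) / (2 * s) ^ 2 -
          (K * c * ((1 + c) * Wt) - K * s * ((-s) * Wt + (1 + c) * (-(K * s) / (1 + c)))) /
            ((1 + c) * Wt) ^ 2) -
        (c / (2 * s) - K * s / ((1 + c) * Wt)) ^ 2 =
        (2 * s ^ 2 + c ^ 2) / (4 * s ^ 2) + K * c / ((1 + c) * Wt) +
          K * (c + c ^ 2 + s ^ 2) / ((1 + c) ^ 2 * Wt) := by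
    field_simp
    ring
  rw [key, show c + c ^ 2 + s ^ 2 = 1 + c by linarith,
    show 2 * s ^ 2 + c ^ 2 = 1 + s ^ 2 by linarith]
  have heq2 : (1 + s ^ 2) / (4 * s ^ 2) + K * c / ((1 + c) * Wt) + K * (1 + c) / ((1 + c) ^ 2 * Wt)
      = 1 / (4 * s ^ 2) + 1 / 4 + K / Wt := by
    field_simp
    ring
  rw [heq2]
  have h2 : K ≤ K / Wt := by
    rw [le_div_iff₀ hW]
    nlinarith
  linarith

/-- Hardy-type inequality on `(0, ω]` (Lemma 4.2): for `ω ∈ (0, π/2]` and every smooth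
function `f` on `(0, ω]` whose support is a compact subset of `(0, ω]`,
`∫₀^ω |f'|² ≥ (1/4) ∫₀^ω |f|²/sin²θ + (π²/(16ω²)) ∫₀^ω |f|²`. -/
theorem hardy_inequality_Ioc (ω : ℝ) (hω : ω ∈ Ioc 0 (π / 2))
    (f : ℝ → ℂ) (hf : ContDiffOn ℝ (⊤ : ℕ∞) f (Ioc 0 ω))
    (hsupp : IsCompact (tsupport f)) (hsupp' : tsupport f ⊆ Ioc 0 ω) :
    ∫ θ in Ioo 0 ω, ‖deriv f θ‖ ^ 2 ≥
      (1 / 4) * ∫ θ in Ioo 0 ω, ‖f θ‖ ^ 2 / Real.sin θ ^ 2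
        + (π ^ 2 / (16 * ω ^ 2)) * ∫ θ in Ioo 0 ω, ‖f θ‖ ^ 2 := by
  obtain ⟨hω0, hωπ⟩ := hω
  have hπpos := Real.pi_pos
  -- a positive lower bound below the support
  have hex : ∃ a : ℝ, 0 < a ∧ a ≤ ω ∧ ∀ x : ℝ, x < a → f x = 0 := by
    rcases Set.eq_empty_or_nonempty (tsupport f) with h | h
    · exact ⟨ω, hω0, le_refl _, fun x _ =>
        image_eq_zero_of_notMem_tsupport (by simp [h])⟩
    · exact ⟨sInf (tsupport f), (hsupp' (hsupp.sInf_mem h)).1, (hsupp' (hsupp.sInf_mem h)).2,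
        fun x hx => image_eq_zero_of_notMem_tsupport fun hxS =>
          absurd (csInf_le hsupp.bddBelow hxS) (not_le.mpr hx)⟩
  obtain ⟨a, ha0, haω, hf0⟩ := hex
  obtain ⟨b, hbdef⟩ : ∃ b : ℝ, b = a / 2 := ⟨_, rfl⟩
  have hb0 : 0 < b := by rw [hbdef]; linarith
  have hba : b < a := by rw [hbdef]; linarith
  have hbω : b < ω := lt_of_lt_of_le hba haω
  have hderiv0 : ∀ x : ℝ, x < a → deriv f x = 0 := by
    intro x hx
    have hev : f =ᶠ[nhds x] fun _ => (0:ℂ) := by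
      filter_upwards [Iio_mem_nhds hx] with y hy using hf0 y hy
    rw [hev.deriv_eq]
    simp
  -- the constant K
  obtain ⟨K, hKdef⟩ : ∃ K : ℝ, K = π ^ 2 / (16 * ω ^ 2) - 1 / 4 := ⟨_, rfl⟩
  have hω2 : (0:ℝ) < ω ^ 2 := by positivity
  have hKA : K * (16 * ω ^ 2) = π ^ 2 - 4 * ω ^ 2 := by rw [hKdef]; field_simp; ring
  have hK0 : 0 ≤ K := by
    rw [hKdef, sub_nonneg, le_div_iff₀ (by positivity)]
    nlinarith
  have hlam : 1 / 4 + K = π ^ 2 / (16 * ω ^ 2) := by rw [hKdef]; ring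
  obtain ⟨hWω, hBB⟩ := hardy_boundary hω0 hωπ hKA hK0
  -- pointwise facts on Icc b ω
  have hIccIoc : Icc b ω ⊆ Ioc 0 ω := fun x hx => ⟨lt_of_lt_of_le hb0 hx.1, hx.2⟩
  have hsubIoo : Ioo b ω ⊆ Ioo 0 ω := fun x hx => ⟨lt_trans hb0 hx.1, hx.2⟩
  have hsin : ∀ t ∈ Icc b ω, 0 < Real.sin t := by
    intro t ht
    exact Real.sin_pos_of_pos_of_lt_pi (lt_of_lt_of_le hb0 ht.1) (by linarith [ht.2])
  have hcos : ∀ t ∈ Icc b ω, 0 ≤ Real.cos t := by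
    intro t ht
    exact Real.cos_nonneg_of_mem_Icc ⟨by linarith [lt_of_lt_of_le hb0 ht.1], le_trans ht.2 hωπ⟩
  have h1c : ∀ t ∈ Icc b ω, 0 < 1 + Real.cos t := by
    intro t ht; linarith [hcos t ht]
  have hWpos : ∀ t ∈ Icc b ω, 0 < hardyW K t := by
    intro t ht
    have hcω : 0 ≤ Real.cos ω := Real.cos_nonneg_of_mem_Icc ⟨by linarith, hωπ⟩
    have h1 : Real.log ((1 + Real.cos ω) / 2) ≤ Real.log ((1 + Real.cos t) / 2) := by
      have hct : Real.cos ω ≤ Real.cos t :=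
        Real.cos_le_cos_of_nonneg_of_le_pi (lt_of_lt_of_le hb0 ht.1).le (by linarith) ht.2
      apply Real.log_le_log (by linarith) (by linarith)
    have h2 : hardyW K ω ≤ hardyW K t := by
      rw [hardyW, hardyW]
      nlinarith [hK0, h1]
    linarith [hWω]
  have hWle1 : ∀ t ∈ Icc b ω, hardyW K t ≤ 1 := by
    intro t ht
    rw [hardyW]
    have h1 : Real.log ((1 + Real.cos t) / 2) ≤ 0 :=
      Real.log_nonpos (by linarith [h1c t ht]) (by linarith [Real.cos_le_one t])
    nlinarith [hK0]
  -- derivative of Φ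
  have hΦd : ∀ t ∈ Ioo b ω, HasDerivAt (hardyPhi K) (hardyPhid K t) t := by
    intro t ht
    have htm : t ∈ Icc b ω := ⟨ht.1.le, ht.2.le⟩
    have hst := hsin t htm
    have hct := h1c t htm
    have hWt := hWpos t htm
    have h1 : HasDerivAt (fun u => 1 + Real.cos u) (-Real.sin t) t :=
      (Real.hasDerivAt_cos t).const_add 1
    have h2 : HasDerivAt (fun u => (1 + Real.cos u) / 2) (-Real.sin t / 2) t := h1.div_const 2
    have h3 : HasDerivAt (fun u => Real.log ((1 + Real.cos u) / 2))
        (-Real.sin t / 2 / ((1 + Real.cos t) / 2)) t := h2.log (by positivity)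
    have h4 : HasDerivAt (hardyW K) (K * (-Real.sin t / 2 / ((1 + Real.cos t) / 2))) t :=
      (h3.const_mul K).const_add 1
    have hct' : (1 + Real.cos t) ≠ 0 := ne_of_gt hct
    have h4' : HasDerivAt (hardyW K) (-(K * Real.sin t) / (1 + Real.cos t)) t := by
      convert h4 using 1
      field_simp
    have h5 : HasDerivAt (fun u => (1 + Real.cos u) * hardyW K u)
        ((-Real.sin t) * hardyW K t + (1 + Real.cos t) * (-(K * Real.sin t) / (1 + Real.cos t)))
        t := h1.mul h4'
    have h6 : HasDerivAt (fun u => K * Real.sin u) (K * Real.cos t) t :=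
      (Real.hasDerivAt_sin t).const_mul K
    have h7 := h6.div h5 (ne_of_gt (mul_pos hct hWt))
    have h8 := (Real.hasDerivAt_cos t).div ((Real.hasDerivAt_sin t).const_mul 2)
      (ne_of_gt (by linarith : (0:ℝ) < 2 * Real.sin t))
    unfold hardyPhi hardyPhid
    exact h8.sub h7
  -- N = |f|² and its derivative
  obtain ⟨N, hNdef⟩ : ∃ N : ℝ → ℝ, N = fun t => (f t).re ^ 2 + (f t).im ^ 2 := ⟨_, rfl⟩
  have hNeq : ∀ t : ℝ, ‖f t‖ ^ 2 = N t := by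
    intro t
    simp only [hNdef]
    rw [← Complex.normSq_eq_norm_sq, Complex.normSq_apply]
    ring
  obtain ⟨fd, hfddef⟩ : ∃ fd : ℝ → ℂ, fd = fun t => derivWithin f (Ioc 0 ω) t := ⟨_, rfl⟩
  have hfdcont : ContinuousOn fd (Ioc 0 ω) := by
    rw [hfddef]
    exact hf.continuousOn_derivWithin (uniqueDiffOn_Ioc 0 ω) (by simp)
  have hfderiv : ∀ t ∈ Ioo 0 ω, HasDerivAt f (fd t) t := by
    intro t ht
    have hnb : Ioc 0 ω ∈ nhds t :=
      Filter.mem_of_superset (Ioo_mem_nhds ht.1 ht.2) Ioo_subset_Ioc_self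
    have hdiff : DifferentiableAt ℝ f t :=
      ((hf.differentiableOn (by simp)) t (Ioo_subset_Ioc_self ht)).differentiableAt hnb
    have heq : fd t = deriv f t := by simp only [hfddef]; exact derivWithin_of_mem_nhds hnb
    rw [heq]
    exact hdiff.hasDerivAt
  have hderiv_eq : ∀ t ∈ Ioo 0 ω, deriv f t = fd t := fun t ht => (hfderiv t ht).deriv
  obtain ⟨Nd, hNddef⟩ : ∃ Nd : ℝ → ℝ,
      Nd = fun t => 2 * ((f t).re * (fd t).re + (f t).im * (fd t).im) := ⟨_, rfl⟩
  have hNderiv : ∀ t ∈ Ioo 0 ω, HasDerivAt N (Nd t) t := by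
    intro t ht
    have hfD := hfderiv t ht
    have hre : HasDerivAt (fun u => (f u).re) ((fd t).re) t :=
      Complex.reCLM.hasFDerivAt.comp_hasDerivAt t hfD
    have him : HasDerivAt (fun u => (f u).im) ((fd t).im) t :=
      Complex.imCLM.hasFDerivAt.comp_hasDerivAt t hfD
    have h := (hre.fun_pow 2).fun_add (him.fun_pow 2)
    rw [hNdef, hNddef]
    refine h.congr_deriv ?_
    push_cast
    ring
  obtain ⟨Gd, hGddef⟩ : ∃ Gd : ℝ → ℝ,
      Gd = fun t => hardyPhid K t * N t + hardyPhi K t * Nd t := ⟨_, rfl⟩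
  have hGderiv : ∀ t ∈ Ioo b ω, HasDerivAt (fun u => hardyPhi K u * N u) (Gd t) t := by
    intro t ht
    have h1 := (hΦd t ht).mul (hNderiv t (hsubIoo ht))
    rw [hGddef]
    exact h1
  -- continuity
  have hsin_cont : ContinuousOn Real.sin (Icc b ω) := Real.continuous_sin.continuousOn
  have hcos_cont : ContinuousOn Real.cos (Icc b ω) := Real.continuous_cos.continuousOn
  have hW_cont : ContinuousOn (hardyW K) (Icc b ω) := by
    unfold hardyW
    apply ContinuousOn.add continuousOn_const
    apply ContinuousOn.mul continuousOn_const
    apply ContinuousOn.log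
    · exact (continuousOn_const.add hcos_cont).div_const 2
    · intro t ht; exact ne_of_gt (by linarith [h1c t ht])
  have hΦ_cont : ContinuousOn (hardyPhi K) (Icc b ω) := by
    unfold hardyPhi
    apply ContinuousOn.sub
    · exact hcos_cont.div (continuousOn_const.mul hsin_cont)
        (fun t ht => ne_of_gt (by linarith [hsin t ht]))
    · exact (continuousOn_const.mul hsin_cont).div
        ((continuousOn_const.add hcos_cont).mul hW_cont)
        (fun t ht => ne_of_gt (mul_pos (h1c t ht) (hWpos t ht)))
  have hΦd_cont : ContinuousOn (hardyPhid K) (Icc b ω) := by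
    unfold hardyPhid
    apply ContinuousOn.sub
    · apply ContinuousOn.div
      · exact ((hsin_cont.neg).mul (continuousOn_const.mul hsin_cont)).sub
          (hcos_cont.mul (continuousOn_const.mul hcos_cont))
      · exact (continuousOn_const.mul hsin_cont).pow 2
      · intro t ht; exact pow_ne_zero 2 (ne_of_gt (by linarith [hsin t ht]))
    · apply ContinuousOn.div
      · apply ContinuousOn.sub
        · exact (continuousOn_const.mul hcos_cont).mul
            ((continuousOn_const.add hcos_cont).mul hW_cont)
        · exact (continuousOn_const.mul hsin_cont).mul
            (((hsin_cont.neg).mul hW_cont).add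
              ((continuousOn_const.add hcos_cont).mul
                (((continuousOn_const.mul hsin_cont).neg).div
                  (continuousOn_const.add hcos_cont)
                  (fun t ht => ne_of_gt (h1c t ht)))))
      · exact ((continuousOn_const.add hcos_cont).mul hW_cont).pow 2
      · intro t ht; exact pow_ne_zero 2 (ne_of_gt (mul_pos (h1c t ht) (hWpos t ht)))
  have hf_cont : ContinuousOn f (Icc b ω) := hf.continuousOn.mono hIccIoc
  have hfd_cont2 : ContinuousOn fd (Icc b ω) := hfdcont.mono hIccIoc
  have hre_cont : ContinuousOn (fun t => (f t).re) (Icc b ω) :=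
    Complex.continuous_re.comp_continuousOn hf_cont
  have him_cont : ContinuousOn (fun t => (f t).im) (Icc b ω) :=
    Complex.continuous_im.comp_continuousOn hf_cont
  have hfdre_cont : ContinuousOn (fun t => (fd t).re) (Icc b ω) :=
    Complex.continuous_re.comp_continuousOn hfd_cont2
  have hfdim_cont : ContinuousOn (fun t => (fd t).im) (Icc b ω) :=
    Complex.continuous_im.comp_continuousOn hfd_cont2
  have hN_cont : ContinuousOn N (Icc b ω) := by
    rw [hNdef]; exact (hre_cont.pow 2).add (him_cont.pow 2)
  have hNd_cont : ContinuousOn Nd (Icc b ω) := by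
    rw [hNddef]
    exact continuousOn_const.mul ((hre_cont.mul hfdre_cont).add (him_cont.mul hfdim_cont))
  have hGd_cont : ContinuousOn Gd (Icc b ω) := by
    rw [hGddef]; exact (hΦd_cont.mul hN_cont).add (hΦ_cont.mul hNd_cont)
  have hVN_cont : ContinuousOn
      (fun t => (1 / (4 * Real.sin t ^ 2) + π ^ 2 / (16 * ω ^ 2)) * N t) (Icc b ω) := by
    apply ContinuousOn.mul _ hN_cont
    apply ContinuousOn.add _ continuousOn_const
    exact continuousOn_const.div (continuousOn_const.mul (hsin_cont.pow 2))
      (fun t ht => ne_of_gt (by nlinarith [hsin t ht]))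
  have hF2_cont : ContinuousOn (fun t => ‖f t‖ ^ 2 / Real.sin t ^ 2) (Icc b ω) :=
    (hf_cont.norm.pow 2).div (hsin_cont.pow 2)
      (fun t ht => pow_ne_zero 2 (ne_of_gt (hsin t ht)))
  have hF3_cont : ContinuousOn (fun t => ‖f t‖ ^ 2) (Icc b ω) := hf_cont.norm.pow 2
  have hFd1_cont : ContinuousOn (fun t => ‖fd t‖ ^ 2) (Icc b ω) := hfd_cont2.norm.pow 2
  -- integrability on Ioo b ω
  have hFd1int : IntegrableOn (fun t => ‖fd t‖ ^ 2) (Ioo b ω) :=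
    hFd1_cont.integrableOn_Icc.mono_set Ioo_subset_Icc_self
  have hF1int : IntegrableOn (fun t => ‖deriv f t‖ ^ 2) (Ioo b ω) :=
    hFd1int.congr_fun (fun x hx => by rw [hderiv_eq x (hsubIoo hx)]) measurableSet_Ioo
  have hF2int : IntegrableOn (fun t => ‖f t‖ ^ 2 / Real.sin t ^ 2) (Ioo b ω) :=
    hF2_cont.integrableOn_Icc.mono_set Ioo_subset_Icc_self
  have hF3int : IntegrableOn (fun t => ‖f t‖ ^ 2) (Ioo b ω) :=
    hF3_cont.integrableOn_Icc.mono_set Ioo_subset_Icc_self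
  have hGdint : IntegrableOn Gd (Ioo b ω) :=
    hGd_cont.integrableOn_Icc.mono_set Ioo_subset_Icc_self
  have hVNint : IntegrableOn
      (fun t => (1 / (4 * Real.sin t ^ 2) + π ^ 2 / (16 * ω ^ 2)) * N t) (Ioo b ω) :=
    hVN_cont.integrableOn_Icc.mono_set Ioo_subset_Icc_self
  -- reduction of integrals to (b, ω)
  have hsplit : ∀ g : ℝ → ℝ, IntegrableOn g (Ioo b ω) → (∀ x ∈ Ioc 0 b, g x = 0) →
      ∫ θ in Ioo 0 ω, g θ = ∫ θ in Ioo b ω, g θ := by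
    intro g hint hzero
    have hdisj : Disjoint (Ioc 0 b) (Ioo b ω) := by
      rw [Set.disjoint_left]
      rintro x ⟨_, hxb⟩ ⟨hbx, _⟩
      exact absurd hbx (not_lt.mpr hxb)
    have hzint : IntegrableOn g (Ioc 0 b) :=
      integrableOn_zero.congr_fun (fun x hx => (hzero x hx).symm) measurableSet_Ioc
    have h0 : ∫ θ in Ioc 0 b, g θ = 0 := by
      calc ∫ θ in Ioc 0 b, g θ = ∫ _ in Ioc 0 b, (0:ℝ) :=
            setIntegral_congr_fun measurableSet_Ioc (fun x hx => hzero x hx)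
        _ = 0 := by simp
    rw [← Ioc_union_Ioo_eq_Ioo hb0.le hbω,
      setIntegral_union hdisj measurableSet_Ioo hzint hint, h0, zero_add]
  have heq1 : ∫ θ in Ioo 0 ω, ‖deriv f θ‖ ^ 2 = ∫ θ in Ioo b ω, ‖deriv f θ‖ ^ 2 := by
    apply hsplit _ hF1int
    intro x hx
    rw [hderiv0 x (lt_of_le_of_lt hx.2 hba)]
    simp
  have heq2 : ∫ θ in Ioo 0 ω, ‖f θ‖ ^ 2 / Real.sin θ ^ 2
      = ∫ θ in Ioo b ω, ‖f θ‖ ^ 2 / Real.sin θ ^ 2 := by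
    apply hsplit _ hF2int
    intro x hx
    rw [hf0 x (lt_of_le_of_lt hx.2 hba)]
    simp
  have heq3 : ∫ θ in Ioo 0 ω, ‖f θ‖ ^ 2 = ∫ θ in Ioo b ω, ‖f θ‖ ^ 2 := by
    apply hsplit _ hF3int
    intro x hx
    rw [hf0 x (lt_of_le_of_lt hx.2 hba)]
    simp
  have hF1eqIoo : ∫ θ in Ioo b ω, ‖deriv f θ‖ ^ 2 = ∫ θ in Ioo b ω, ‖fd θ‖ ^ 2 :=
    setIntegral_congr_fun measurableSet_Ioo (fun x hx => by rw [hderiv_eq x (hsubIoo hx)])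
  -- the pointwise differential inequality
  have hpoint : ∀ t ∈ Ioo b ω,
      Gd t + (1 / (4 * Real.sin t ^ 2) + π ^ 2 / (16 * ω ^ 2)) * N t ≤ ‖fd t‖ ^ 2 := by
    intro t ht
    have htm : t ∈ Icc b ω := ⟨ht.1.le, ht.2.le⟩
    have hst := hsin t htm
    have hric := hardy_riccati (Real.sin t) (Real.cos t) (hardyW K t) K hst (h1c t htm)
      (hWpos t htm) (hWle1 t htm) hK0 (Real.sin_sq_add_cos_sq t)
    have hric' : 1 / (4 * Real.sin t ^ 2) + 1 / 4 + K ≤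
        -hardyPhid K t - hardyPhi K t ^ 2 := by
      unfold hardyPhid hardyPhi
      exact hric
    have hnn : 0 ≤ N t := by simp only [hNdef]; positivity
    have hprod : 0 ≤ (-hardyPhid K t - hardyPhi K t ^ 2 -
        (1 / (4 * Real.sin t ^ 2) + 1 / 4 + K)) * N t :=
      mul_nonneg (by linarith) hnn
    have hnormfd : ‖fd t‖ ^ 2 = (fd t).re ^ 2 + (fd t).im ^ 2 := by
      rw [← Complex.normSq_eq_norm_sq, Complex.normSq_apply]; ring
    rw [hnormfd, ← hlam]
    simp only [hGddef, hNdef, hNddef] at hprod ⊢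
    nlinarith [hprod, sq_nonneg ((fd t).re - hardyPhi K t * (f t).re),
      sq_nonneg ((fd t).im - hardyPhi K t * (f t).im)]
  have hmono : ∫ t in Ioo b ω,
      (Gd t + (1 / (4 * Real.sin t ^ 2) + π ^ 2 / (16 * ω ^ 2)) * N t)
      ≤ ∫ t in Ioo b ω, ‖fd t‖ ^ 2 :=
    setIntegral_mono_on (hGdint.add hVNint) hFd1int measurableSet_Ioo hpoint
  -- fundamental theorem of calculus for G
  have hG_cont : ContinuousOn (fun t => hardyPhi K t * N t) (Icc b ω) := hΦ_cont.mul hN_cont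
  have hGd_ii : IntervalIntegrable Gd volume b ω := by
    apply ContinuousOn.intervalIntegrable
    rwa [uIcc_of_le hbω.le]
  have hFTC : ∫ t in b..ω, Gd t = hardyPhi K ω * N ω - hardyPhi K b * N b :=
    intervalIntegral.integral_eq_sub_of_hasDeriv_right_of_le hbω.le hG_cont
      (fun t htt => (hGderiv t htt).hasDerivWithinAt) hGd_ii
  have hNb : N b = 0 := by simp [hNdef, hf0 b hba]
  have hGInt : ∫ t in Ioo b ω, Gd t = hardyPhi K ω * N ω := by
    rw [← MeasureTheory.integral_Ioc_eq_integral_Ioo, ← intervalIntegral.integral_of_le hbω.le,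
      hFTC, hNb]
    ring
  have hΦω : 0 ≤ hardyPhi K ω := by
    have hsω : 0 < Real.sin ω := hsin ω ⟨hbω.le, le_refl ω⟩
    have hcω : 0 ≤ Real.cos ω := hcos ω ⟨hbω.le, le_refl ω⟩
    have h1cω : (0:ℝ) < 1 + Real.cos ω := by linarith
    unfold hardyPhi
    rw [sub_nonneg, div_le_div_iff₀ (mul_pos h1cω hWω) (by linarith)]
    nlinarith [hBB, Real.sin_sq_add_cos_sq ω, hWω,
      mul_le_mul_of_nonneg_right hBB h1cω.le]
  have hNω : 0 ≤ N ω := by simp only [hNdef]; positivity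
  -- splitting the potential term
  have hVNsplit : ∫ t in Ioo b ω, (1 / (4 * Real.sin t ^ 2) + π ^ 2 / (16 * ω ^ 2)) * N t
      = (1 / 4) * (∫ t in Ioo b ω, ‖f t‖ ^ 2 / Real.sin t ^ 2)
        + (π ^ 2 / (16 * ω ^ 2)) * (∫ t in Ioo b ω, ‖f t‖ ^ 2) := by
    have heq : ∀ t ∈ Ioo b ω, (1 / (4 * Real.sin t ^ 2) + π ^ 2 / (16 * ω ^ 2)) * N t
        = (1 / 4) * (‖f t‖ ^ 2 / Real.sin t ^ 2) + (π ^ 2 / (16 * ω ^ 2)) * ‖f t‖ ^ 2 := by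
      intro t ht
      have hst := hsin t ⟨ht.1.le, ht.2.le⟩
      rw [← hNeq t]
      field_simp
    have hpull : ∀ (r : ℝ) (g : ℝ → ℝ),
        ∫ t in Ioo b ω, r * g t = r * ∫ t in Ioo b ω, g t := by
      intro r g
      calc ∫ t in Ioo b ω, r * g t = ∫ t in Ioo b ω, r • g t := by simp [smul_eq_mul]
        _ = r • ∫ t in Ioo b ω, g t := integral_smul r g
        _ = r * ∫ t in Ioo b ω, g t := by simp [smul_eq_mul]
    rw [setIntegral_congr_fun measurableSet_Ioo heq,
      integral_add (hF2int.const_mul _) (hF3int.const_mul _),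
      hpull (1 / 4) (fun t => ‖f t‖ ^ 2 / Real.sin t ^ 2),
      hpull (π ^ 2 / (16 * ω ^ 2)) (fun t => ‖f t‖ ^ 2)]
  have hIadd : ∫ t in Ioo b ω,
      (Gd t + (1 / (4 * Real.sin t ^ 2) + π ^ 2 / (16 * ω ^ 2)) * N t)
      = (∫ t in Ioo b ω, Gd t)
        + ∫ t in Ioo b ω, (1 / (4 * Real.sin t ^ 2) + π ^ 2 / (16 * ω ^ 2)) * N t :=
    integral_add hGdint hVNint
  have hI3nn : 0 ≤ ∫ θ in Ioo 0 ω, ‖f θ‖ ^ 2 :=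
    integral_nonneg fun θ => by positivity
  have hF2zero : ∀ x ∈ Ioc 0 b, ‖f x‖ ^ 2 / Real.sin x ^ 2 = 0 := by
    intro x hx
    rw [hf0 x (lt_of_le_of_lt hx.2 hba)]
    simp
  have hF2intFull : IntegrableOn (fun θ => ‖f θ‖ ^ 2 / Real.sin θ ^ 2) (Ioo 0 ω) := by
    rw [← Ioc_union_Ioo_eq_Ioo hb0.le hbω]
    exact (integrableOn_zero.congr_fun (fun x hx => (hF2zero x hx).symm)
      measurableSet_Ioc).union hF2int
  have hvol : (volume (Ioo (0:ℝ) ω)).toReal = ω := by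
    rw [Real.volume_Ioo, ENNReal.toReal_ofReal (by linarith)]
    ring
  have hsum : ∫ θ in Ioo 0 ω, (‖f θ‖ ^ 2 / Real.sin θ ^ 2
        + π ^ 2 / (16 * ω ^ 2) * ∫ θ in Ioo 0 ω, ‖f θ‖ ^ 2)
      = (∫ θ in Ioo 0 ω, ‖f θ‖ ^ 2 / Real.sin θ ^ 2)
        + (π ^ 2 / (16 * ω ^ 2) * ∫ θ in Ioo 0 ω, ‖f θ‖ ^ 2) * ω := by
    rw [integral_add hF2intFull (integrable_const _), setIntegral_const, smul_eq_mul, measureReal_def, hvol]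
    ring
  have hP : (0:ℝ) ≤ π ^ 2 / (16 * ω ^ 2) * ∫ θ in Ioo 0 ω, ‖f θ‖ ^ 2 :=
    mul_nonneg (by positivity) hI3nn
  have hPω : (π ^ 2 / (16 * ω ^ 2) * ∫ θ in Ioo 0 ω, ‖f θ‖ ^ 2) * ω
      ≤ (π ^ 2 / (16 * ω ^ 2) * ∫ θ in Ioo 0 ω, ‖f θ‖ ^ 2) * 4 :=
    mul_le_mul_of_nonneg_left (by linarith [Real.pi_le_four]) hP
  have heq3' : π ^ 2 / (16 * ω ^ 2) * (∫ θ in Ioo b ω, ‖f θ‖ ^ 2)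
      = π ^ 2 / (16 * ω ^ 2) * (∫ θ in Ioo 0 ω, ‖f θ‖ ^ 2) := by rw [heq3]
  rw [ge_iff_le, hsum]
  rw [hIadd] at hmono
  linarith [heq1, heq2, heq3', hF1eqIoo, hmono, hGInt, hVNsplit,
    mul_nonneg hΦω hNω, hPω]

end
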